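/- Under the modular setup below, for every ε ∈ (0, A), along every sequence (β_n, β̄_n) in (0,∞)² tending to the M* limit (i.e. β_n → 0, β̄_n → ∞, 𝔟(β_n, β̄_n) → ∞), one has (1/β_n) · K(β_n, β̄_n) · ∫_{ {(h,h̄) : h ≤ A − ε} } e^{ −(4π²/β_n) h − (4π²/β̄_n) h̄ } dμ(h, h̄) → 0. -/

import Mathlib

open MeasureTheory Filter

/-- The reduced partition function
`Z̃(β, β̄) = (1-e^{-β})(1-e^{-β̄}) + ∫ e^{-βh - β̄h̄} dμ(h,h̄)`. -/
noncomputable def Ztil (μ : Measure (ℝ × ℝ)) (β βb : ℝ) : ℝ :=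
  (1 - Real.exp (-β)) * (1 - Real.exp (-βb)) +
    ∫ p : ℝ × ℝ, Real.exp (-β * p.1 - βb * p.2) ∂μ

/-- The modular crossing kernel
`K(β, β̄) = (2π/√(ββ̄)) exp(4π²A/β + 4π²A/β̄ - Aβ - Aβ̄)`. -/
noncomputable def Kker (A β βb : ℝ) : ℝ :=
  2 * Real.pi / Real.sqrt (β * βb) *
    Real.exp (4 * Real.pi ^ 2 * A / β + 4 * Real.pi ^ 2 * A / βb - A * β - A * βb)

/-- `𝔟(β, β̄) = β̄ - 4π²A/(Tβ) + (3/(2T)) log β`. -/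
noncomputable def bfrak (A T β βb : ℝ) : ℝ :=
  βb - 4 * Real.pi ^ 2 * A / (T * β) + 3 / (2 * T) * Real.log β

/-! Tilting the cut `h ≤ A - ε` by `e^{σ (A - ε - h)}` bounds the crossed-channel integral by
`e^{σ (A - ε)} Z̃(4π²/β + σ, 4π²/β̄)`. Modular invariance turns this into `Z̃(s, β̄)` with
`s = 4π² / (4π²/β + σ) ≤ β`: its vacuum part is at most `s`, and the rest, with `β̄` lowered
to `1` (gaining the factor `e^{-(β̄ - 1) T}` since `h̄ ≥ T`), is controlled by a second modular
transformation. The kernels telescope, `K(u, y) K(v, 4π²/y) = K(u, v)`, leaving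
`e^{-εσ} + C e^{(A - ε) σ - T 𝔟}`; a tilt `σ` proportional to `𝔟` makes both terms vanish. -/

open Real

noncomputable def vacuum (x y : ℝ) : ℝ := (1 - exp (-x)) * (1 - exp (-y))

noncomputable def Zint (μ : Measure (ℝ × ℝ)) (x y : ℝ) : ℝ :=
  ∫ p : ℝ × ℝ, exp (-x * p.1 - y * p.2) ∂μ

lemma one_sub_exp_neg_nonneg {x : ℝ} (hx : 0 ≤ x) : 0 ≤ 1 - exp (-x) :=
  sub_nonneg.2 (exp_le_one_iff.2 (neg_nonpos.2 hx))

lemma vacuum_nonneg {x y : ℝ} (hx : 0 ≤ x) (hy : 0 ≤ y) : 0 ≤ vacuum x y :=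
  mul_nonneg (one_sub_exp_neg_nonneg hx) (one_sub_exp_neg_nonneg hy)

lemma vacuum_le_left {x y : ℝ} (hx : 0 ≤ x) (hy : 0 ≤ y) : vacuum x y ≤ x := by
  have h₁ : 1 - exp (-x) ≤ x := by linarith [add_one_le_exp (-x)]
  have h₂ : 1 - exp (-y) ≤ 1 := by linarith [exp_pos (-y)]
  simpa [vacuum] using mul_le_mul h₁ h₂ (one_sub_exp_neg_nonneg hy) hx

lemma vacuum_le_one {x y : ℝ} (hy : 0 ≤ y) : vacuum x y ≤ 1 :=
  mul_le_one₀ (by linarith [exp_pos (-x)]) (one_sub_exp_neg_nonneg hy)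
    (by linarith [exp_pos (-y)])

lemma Zint_nonneg (μ : Measure (ℝ × ℝ)) (x y : ℝ) : 0 ≤ Zint μ x y :=
  integral_nonneg fun _ => (exp_pos _).le

lemma Zint_le_Ztil (μ : Measure (ℝ × ℝ)) {x y : ℝ} (hx : 0 ≤ x) (hy : 0 ≤ y) :
    Zint μ x y ≤ Ztil μ x y :=
  le_add_of_nonneg_left (vacuum_nonneg hx hy)

section Integrals

variable {μ : Measure (ℝ × ℝ)} {T : ℝ}

lemma Zint_le_exp_mul_Zint (hae : ∀ᵐ p ∂μ, T ≤ p.1 ∧ T ≤ p.2)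
    (hint : ∀ x y : ℝ, 0 < x → 0 < y → Integrable (fun p : ℝ × ℝ => exp (-x * p.1 - y * p.2)) μ)
    {x y x₀ y₀ : ℝ} (hx₀ : 0 < x₀) (hy₀ : 0 < y₀) (hx : x₀ ≤ x) (hy : y₀ ≤ y) :
    Zint μ x y ≤ exp (-((x - x₀ + (y - y₀)) * T)) * Zint μ x₀ y₀ := by
  rw [Zint, Zint, ← integral_const_mul]
  refine integral_mono_ae (hint x y (hx₀.trans_le hx) (hy₀.trans_le hy))
    ((hint x₀ y₀ hx₀ hy₀).const_mul _) ?_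
  filter_upwards [hae] with p ⟨hp₁, hp₂⟩
  rw [← exp_add, exp_le_exp]
  nlinarith [mul_le_mul_of_nonneg_left hp₁ (sub_nonneg.2 hx),
    mul_le_mul_of_nonneg_left hp₂ (sub_nonneg.2 hy)]

lemma Ztil_le_one_add_Zint (hT : 0 ≤ T) (hae : ∀ᵐ p ∂μ, T ≤ p.1 ∧ T ≤ p.2)
    (hint : ∀ x y : ℝ, 0 < x → 0 < y → Integrable (fun p : ℝ × ℝ => exp (-x * p.1 - y * p.2)) μ)
    {x y x₀ y₀ : ℝ} (hx₀ : 0 < x₀) (hy₀ : 0 < y₀) (hx : x₀ ≤ x) (hy : y₀ ≤ y) :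
    Ztil μ x y ≤ 1 + Zint μ x₀ y₀ := by
  refine add_le_add (vacuum_le_one (by linarith)) ?_
  refine (Zint_le_exp_mul_Zint hae hint hx₀ hy₀ hx hy).trans ?_
  refine mul_le_of_le_one_left (Zint_nonneg μ x₀ y₀) (exp_le_one_iff.2 ?_)
  nlinarith

lemma setIntegral_fst_le_le_exp_mul_Zint
    (hint : ∀ x y : ℝ, 0 < x → 0 < y → Integrable (fun p : ℝ × ℝ => exp (-x * p.1 - y * p.2)) μ)
    {c x y σ : ℝ} (hx : 0 < x) (hy : 0 < y) (hσ : 0 ≤ σ) :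
    ∫ p in {p : ℝ × ℝ | p.1 ≤ c}, exp (-x * p.1 - y * p.2) ∂μ ≤ exp (σ * c) * Zint μ (x + σ) y := by
  have hxσ : 0 < x + σ := by linarith
  calc ∫ p in {p : ℝ × ℝ | p.1 ≤ c}, exp (-x * p.1 - y * p.2) ∂μ
      ≤ ∫ p in {p : ℝ × ℝ | p.1 ≤ c}, exp (σ * c) * exp (-(x + σ) * p.1 - y * p.2) ∂μ := by
        refine setIntegral_mono_on (hint x y hx hy).integrableOn
          ((hint _ y hxσ hy).const_mul _).integrableOn
          (measurableSet_le measurable_fst measurable_const) fun p hp => ?_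
        rw [← exp_add, exp_le_exp]
        nlinarith [mul_le_mul_of_nonneg_left (show p.1 ≤ c from hp) hσ]
    _ = exp (σ * c) * ∫ p in {p : ℝ × ℝ | p.1 ≤ c}, exp (-(x + σ) * p.1 - y * p.2) ∂μ :=
        integral_const_mul _ _
    _ ≤ exp (σ * c) * Zint μ (x + σ) y :=
        mul_le_mul_of_nonneg_left (setIntegral_le_integral (hint _ y hxσ hy)
          (Eventually.of_forall fun _ => (exp_pos _).le)) (exp_nonneg _)

end Integrals

lemma Kker_nonneg (A u v : ℝ) : 0 ≤ Kker A u v := by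
  unfold Kker; positivity

lemma Kker_comm (A u v : ℝ) : Kker A u v = Kker A v u := by
  unfold Kker; rw [mul_comm u v]; ring_nf

lemma Kker_mul_Kker_div {A u v y : ℝ} (hu : 0 < u) (hv : 0 < v) (hy : 0 < y) :
    Kker A u y * Kker A v (4 * π ^ 2 / y) = Kker A u v := by
  have hsqrt : √(u * y) * √(v * (4 * π ^ 2 / y)) = 2 * π * √(u * v) := by
    rw [← sqrt_mul (by positivity), show u * y * (v * (4 * π ^ 2 / y)) = (2 * π) ^ 2 * (u * v) by
      field_simp; ring, sqrt_mul (by positivity), sqrt_sq (by positivity)]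
  unfold Kker
  rw [mul_mul_mul_comm, ← exp_add, div_mul_div_comm, hsqrt]
  congr 1
  · field_simp
  · congr 1; field_simp; ring

lemma Kker_le_exp_of_le_mul {A u v : ℝ} (hA : 0 ≤ A) (hu : 0 < u) (hv : 0 < v)
    (huv : 4 * π ^ 2 ≤ u * v) :
    Kker A u v ≤ exp (A * (4 * π ^ 2 / u - v)) := by
  have hpre : 2 * π / √(u * v) ≤ 1 := by
    rw [div_le_one (by positivity)]
    calc 2 * π = √((2 * π) ^ 2) := (sqrt_sq (by positivity)).symm
      _ ≤ √(u * v) := sqrt_le_sqrt (by nlinarith)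
  have hexp : 4 * π ^ 2 * A / v ≤ A * u := by
    rw [div_le_iff₀ hv]; nlinarith
  unfold Kker
  refine (mul_le_mul hpre (exp_le_exp.2 ?_) (exp_nonneg _) zero_le_one).trans_eq (one_mul _)
  have : 4 * π ^ 2 * A / u = A * (4 * π ^ 2 / u) := by ring
  nlinarith

lemma one_div_mul_Kker_one_mul_exp_le {A T b y : ℝ} (hA : 0 ≤ A) (hT : 0 < T) (hb : 0 < b) :
    1 / b * Kker A b 1 * exp ((1 - y) * T) ≤
      2 * π * exp (4 * π ^ 2 * A + T - T * bfrak A T b y) := by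
  have hsqrt : √b = exp (log b / 2) := by
    rw [sqrt_eq_rpow, rpow_def_of_pos hb]; ring_nf
  have hT𝔟 : T * bfrak A T b y = T * y - 4 * π ^ 2 * A / b + 3 / 2 * log b := by
    unfold bfrak; field_simp
  unfold Kker
  have hinv : 1 / b = exp (-log b) := by rw [exp_neg, exp_log hb, one_div]
  simp only [mul_one, div_one]
  rw [hsqrt, hT𝔟, hinv, div_eq_mul_inv (2 * π), ← exp_neg,
    show ∀ a b c d : ℝ, exp a * (2 * π * exp b * exp c) * exp d = 2 * π * exp (a + b + c + d) by
      intros; simp only [exp_add]; ring]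
  gcongr
  nlinarith [mul_nonneg hA hb.le]

lemma one_div_mul_Kker_mul_le {A b σ : ℝ} (hA : 0 ≤ A) (hb : 0 < b) (hσ : 0 ≤ σ) :
    1 / b * Kker A b (4 * π ^ 2 / b + σ) * (4 * π ^ 2 / (4 * π ^ 2 / b + σ)) ≤ exp (-(A * σ)) := by
  set x := 4 * π ^ 2 / b + σ with hx_def
  have hx : 0 < x := by positivity
  have hbx : 4 * π ^ 2 ≤ b * x := by
    rw [hx_def, mul_add, mul_div_cancel₀ _ hb.ne']; nlinarith
  calc 1 / b * Kker A b x * (4 * π ^ 2 / x) ≤ 1 / b * exp (A * (4 * π ^ 2 / b - x)) * b := by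
        gcongr
        · exact Kker_le_exp_of_le_mul hA hb hx hbx
        · exact div_le_of_le_mul₀ hx.le hb.le hbx
    _ = exp (-(A * σ)) := by
        rw [show A * (4 * π ^ 2 / b - x) = -(A * σ) by rw [hx_def]; ring]; field_simp

section Modular

variable {A T : ℝ} {μ : Measure (ℝ × ℝ)}

lemma setIntegral_fst_le_le_exp_mul_Kker_mul_Ztil
    (hint : ∀ x y : ℝ, 0 < x → 0 < y → Integrable (fun p : ℝ × ℝ => exp (-x * p.1 - y * p.2)) μ)
    (hmod : ∀ β βb : ℝ, 0 < β → 0 < βb →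
      Ztil μ β βb = Kker A β βb * Ztil μ (4 * π ^ 2 / β) (4 * π ^ 2 / βb))
    {c x y σ : ℝ} (hx : 0 < x) (hy : 0 < y) (hσ : 0 ≤ σ) :
    ∫ p in {p : ℝ × ℝ | p.1 ≤ c}, exp (-x * p.1 - (4 * π ^ 2 / y) * p.2) ∂μ ≤
      exp (σ * c) * (Kker A (x + σ) (4 * π ^ 2 / y) * Ztil μ (4 * π ^ 2 / (x + σ)) y) := by
  have hxσ : 0 < x + σ := by linarith
  refine (setIntegral_fst_le_le_exp_mul_Zint hint hx (by positivity) hσ).trans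
    (mul_le_mul_of_nonneg_left ?_ (exp_nonneg _))
  refine (Zint_le_Ztil μ hxσ.le (by positivity)).trans_eq ?_
  rw [hmod _ _ hxσ (by positivity), div_div_cancel₀ (by positivity)]

lemma Ztil_le_add_exp_mul_Kker (hT : 0 ≤ T) (hae : ∀ᵐ p ∂μ, T ≤ p.1 ∧ T ≤ p.2)
    (hint : ∀ x y : ℝ, 0 < x → 0 < y → Integrable (fun p : ℝ × ℝ => exp (-x * p.1 - y * p.2)) μ)
    (hmod : ∀ β βb : ℝ, 0 < β → 0 < βb →
      Ztil μ β βb = Kker A β βb * Ztil μ (4 * π ^ 2 / β) (4 * π ^ 2 / βb))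
    {s y : ℝ} (hs : 0 < s) (hy : 1 ≤ y) (hs₁ : 1 ≤ 4 * π ^ 2 / s) :
    Ztil μ s y ≤ s + exp ((1 - y) * T) * Kker A s 1 * (1 + Zint μ 1 (4 * π ^ 2)) := by
  have hshift : Zint μ s y ≤ exp ((1 - y) * T) * Zint μ s 1 := by
    convert Zint_le_exp_mul_Zint hae hint hs one_pos le_rfl hy using 3; ring
  calc Ztil μ s y = vacuum s y + Zint μ s y := rfl
    _ ≤ s + exp ((1 - y) * T) * Ztil μ s 1 :=
        add_le_add (vacuum_le_left hs.le (by linarith)) (hshift.trans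
          (mul_le_mul_of_nonneg_left (Zint_le_Ztil μ hs.le zero_le_one) (exp_nonneg _)))
    _ = s + exp ((1 - y) * T) * Kker A s 1 * Ztil μ (4 * π ^ 2 / s) (4 * π ^ 2) := by
        rw [hmod s 1 hs one_pos, div_one, mul_assoc]
    _ ≤ s + exp ((1 - y) * T) * Kker A s 1 * (1 + Zint μ 1 (4 * π ^ 2)) := by
        gcongr
        · exact mul_nonneg (exp_nonneg _) (Kker_nonneg A s 1)
        · exact Ztil_le_one_add_Zint hT hae hint one_pos (by positivity) hs₁ le_rfl

theorem one_div_mul_Kker_mul_setIntegral_le (hA : 0 ≤ A) (hT : 0 < T)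
    (hae : ∀ᵐ p ∂μ, T ≤ p.1 ∧ T ≤ p.2)
    (hint : ∀ x y : ℝ, 0 < x → 0 < y → Integrable (fun p : ℝ × ℝ => exp (-x * p.1 - y * p.2)) μ)
    (hmod : ∀ β βb : ℝ, 0 < β → 0 < βb →
      Ztil μ β βb = Kker A β βb * Ztil μ (4 * π ^ 2 / β) (4 * π ^ 2 / βb))
    {b y c σ : ℝ} (hb : 0 < b) (hy : 1 ≤ y) (hσ : 1 ≤ σ) :
    1 / b * Kker A b y * ∫ p in {p : ℝ × ℝ | p.1 ≤ c},
        exp (-(4 * π ^ 2 / b) * p.1 - (4 * π ^ 2 / y) * p.2) ∂μ ≤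
      exp (-((A - c) * σ)) +
        2 * π * exp (4 * π ^ 2 * A + T) * (1 + Zint μ 1 (4 * π ^ 2)) *
          exp (c * σ - T * bfrak A T b y) := by
  set x := 4 * π ^ 2 / b + σ
  set s := 4 * π ^ 2 / x
  set D := 1 + Zint μ 1 (4 * π ^ 2)
  have hb' : 0 < 4 * π ^ 2 / b := by positivity
  have hx : 0 < x := by positivity
  have hD : 0 ≤ D := add_nonneg zero_le_one (Zint_nonneg μ 1 _)
  have hI := setIntegral_fst_le_le_exp_mul_Kker_mul_Ztil (c := c) hint hmod hb'
    (by linarith : 0 < y) (by linarith : 0 ≤ σ)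
  have hZ : Ztil μ s y ≤ s + exp ((1 - y) * T) * Kker A s 1 * D :=
    Ztil_le_add_exp_mul_Kker hT.le hae hint hmod (by positivity) hy
      (by rw [div_div_cancel₀ (by positivity)]; linarith)
  have e₁ : Kker A b y * Kker A x (4 * π ^ 2 / y) = Kker A b x :=
    Kker_mul_Kker_div hb hx (by linarith)
  have e₂ : Kker A b x * Kker A 1 s = Kker A b 1 := Kker_mul_Kker_div hb one_pos hx
  calc 1 / b * Kker A b y * ∫ p in {p : ℝ × ℝ | p.1 ≤ c},
        exp (-(4 * π ^ 2 / b) * p.1 - (4 * π ^ 2 / y) * p.2) ∂μ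
      ≤ 1 / b * Kker A b y * (exp (σ * c) *
          (Kker A x (4 * π ^ 2 / y) * (s + exp ((1 - y) * T) * Kker A s 1 * D))) := by
        have := Kker_nonneg A b y
        have := Kker_nonneg A x (4 * π ^ 2 / y)
        gcongr
        exact hI.trans (by gcongr)
    _ = exp (σ * c) * (1 / b * Kker A b x * s) +
          exp (σ * c) * (1 / b * Kker A b 1 * exp ((1 - y) * T)) * D := by
        rw [Kker_comm A s 1]
        linear_combination (1 / b * exp (σ * c) * s + 1 / b * exp (σ * c) * exp ((1 - y) * T) *
          Kker A 1 s * D) * e₁ + 1 / b * exp (σ * c) * exp ((1 - y) * T) * D * e₂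
    _ ≤ exp (σ * c) * exp (-(A * σ)) +
          exp (σ * c) * (2 * π * exp (4 * π ^ 2 * A + T - T * bfrak A T b y)) * D := by
        gcongr _ * ?_ + _ * ?_ * _
        · exact one_div_mul_Kker_mul_le hA hb (by linarith)
        · exact one_div_mul_Kker_one_mul_exp_le hA hT hb
    _ = _ := by
        rw [← exp_add, show σ * c + -(A * σ) = -((A - c) * σ) by ring, mul_comm σ c, exp_sub,
          exp_sub]
        field_simp

end Modular

theorem stmt18_general (A T : ℝ) (hA : 0 < A) (hT : 0 < T) (μ : Measure (ℝ × ℝ))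
    (hsupp : μ {p : ℝ × ℝ | p.1 < T ∨ p.2 < T} = 0)
    (hint : ∀ β βb : ℝ, 0 < β → 0 < βb →
      Integrable (fun p : ℝ × ℝ => Real.exp (-β * p.1 - βb * p.2)) μ)
    (hmod : ∀ β βb : ℝ, 0 < β → 0 < βb →
      Ztil μ β βb = Kker A β βb * Ztil μ (4 * Real.pi ^ 2 / β) (4 * Real.pi ^ 2 / βb))
    (ε : ℝ) (hε0 : 0 < ε)
    (β βb : ℕ → ℝ) (hβpos : ∀ n, 0 < β n)
    (hβb : Tendsto βb atTop atTop)
    (hM : Tendsto (fun n => bfrak A T (β n) (βb n)) atTop atTop) :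
    Tendsto
      (fun n => (1 / β n) * Kker A (β n) (βb n) *
        ∫ p in {p : ℝ × ℝ | p.1 ≤ A - ε},
          Real.exp (-(4 * Real.pi ^ 2 / β n) * p.1 - (4 * Real.pi ^ 2 / βb n) * p.2) ∂μ)
      atTop (nhds 0) := by
  have hae : ∀ᵐ p ∂μ, T ≤ p.1 ∧ T ≤ p.2 := by
    rw [ae_iff]; simpa only [not_and_or, not_le] using hsupp
  set C := 2 * π * exp (4 * π ^ 2 * A + T) * (1 + Zint μ 1 (4 * π ^ 2))
  -- the tilt `σ` is chosen so that `A σ` is half the decay rate `T 𝔟` of the second term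
  set σ : ℕ → ℝ := fun n => T / (2 * A) * bfrak A T (β n) (βb n)
  have hσ : Tendsto σ atTop atTop := hM.const_mul_atTop (by positivity)
  have hbound : ∀ᶠ n in atTop, 1 / β n * Kker A (β n) (βb n) *
      ∫ p in {p : ℝ × ℝ | p.1 ≤ A - ε},
        exp (-(4 * π ^ 2 / β n) * p.1 - (4 * π ^ 2 / βb n) * p.2) ∂μ ≤
      exp (-(ε * σ n)) + C * exp (-(T / 2 * bfrak A T (β n) (βb n))) := by
    filter_upwards [hβb.eventually_ge_atTop 1, hσ.eventually_ge_atTop 1] with n hy hσn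
    refine (one_div_mul_Kker_mul_setIntegral_le hA.le hT hae hint hmod (hβpos n) hy hσn).trans ?_
    rw [sub_sub_cancel]
    have hC : 0 ≤ C := mul_nonneg (by positivity) (add_nonneg zero_le_one (Zint_nonneg μ 1 _))
    gcongr
    have : A * σ n = T / 2 * bfrak A T (β n) (βb n) := by simp only [σ]; field_simp
    nlinarith
  refine squeeze_zero' (Eventually.of_forall fun n => ?_) hbound ?_
  · exact mul_nonneg (mul_nonneg (one_div_nonneg.2 (hβpos n).le) (Kker_nonneg _ _ _))
      (integral_nonneg fun _ => (exp_pos _).le)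
  · simpa using (tendsto_exp_neg_atTop_nhds_zero.comp (hσ.const_mul_atTop hε0)).add
      ((tendsto_exp_neg_atTop_nhds_zero.comp (hM.const_mul_atTop (half_pos hT))).const_mul C)

/-- crossed-channel low-`h` estimate, Section 3.2.6: for every
`ε ∈ (0, A)`, along sequences in the M* limit (`β → 0`, `β̄ → ∞`, `𝔟 → ∞`), the
crossed-channel contribution of `h ≤ A - ε` is `o(β)`. -/
theorem stmt18 (A T : ℝ) (hA : 0 < A) (hT : 0 < T) (μ : Measure (ℝ × ℝ))
    (hsupp : μ {p : ℝ × ℝ | p.1 < T ∨ p.2 < T} = 0)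
    (hint : ∀ β βb : ℝ, 0 < β → 0 < βb →
      Integrable (fun p : ℝ × ℝ => Real.exp (-β * p.1 - βb * p.2)) μ)
    (hmod : ∀ β βb : ℝ, 0 < β → 0 < βb →
      Ztil μ β βb = Kker A β βb * Ztil μ (4 * Real.pi ^ 2 / β) (4 * Real.pi ^ 2 / βb))
    (ε : ℝ) (hε0 : 0 < ε) (hεA : ε < A)
    (β βb : ℕ → ℝ) (hβpos : ∀ n, 0 < β n) (hβbpos : ∀ n, 0 < βb n)
    (hβ0 : Tendsto β atTop (nhds 0)) (hβb : Tendsto βb atTop atTop)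
    (hM : Tendsto (fun n => bfrak A T (β n) (βb n)) atTop atTop) :
    Tendsto
      (fun n => (1 / β n) * Kker A (β n) (βb n) *
        ∫ p in {p : ℝ × ℝ | p.1 ≤ A - ε},
          Real.exp (-(4 * Real.pi ^ 2 / β n) * p.1 - (4 * Real.pi ^ 2 / βb n) * p.2) ∂μ)
      atTop (nhds 0) :=
  stmt18_general A T hA hT μ hsupp hint hmod ε hε0 β βb hβpos hβb hM
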